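/- For every Hermitian matrix σ ∈ ℂ^{m×m}, every s ∈ [0,T] and every t ≥ 0, the trace-norm inequality ‖e^{tA(s)†} σ e^{tA(s)}‖₁ ≤ ‖σ‖₁ holds. -/

import Mathlib

open Matrix Set
open scoped ComplexOrder

attribute [local instance] Matrix.normedAddCommGroup Matrix.normedSpace

/-- Trace norm: `‖X‖₁ = Tr √(XᴴX)`. -/
noncomputable def traceNorm {m : ℕ} (X : Matrix (Fin m) (Fin m) ℂ) : ℝ :=
  (((Matrix.posSemidef_conjTranspose_mul_self X).1.eigenvectorUnitary : Matrix (Fin m) (Fin m) ℂ) *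
    diagonal (((↑) : ℝ → ℂ) ∘ (√·) ∘ (Matrix.posSemidef_conjTranspose_mul_self X).1.eigenvalues) *
    (star (Matrix.posSemidef_conjTranspose_mul_self X).1.eigenvectorUnitary : Matrix (Fin m) (Fin m) ℂ)).trace.re

/-- `A(t) = -i H(t) - (1/2) ∑ₖ γₖ(t) Lₖᴴ Lₖ`. -/
noncomputable def Aop {m K : ℕ} (H : ℝ → Matrix (Fin m) (Fin m) ℂ)
    (L : Fin K → Matrix (Fin m) (Fin m) ℂ) (γ : Fin K → ℝ → ℝ) (t : ℝ) : Matrix (Fin m) (Fin m) ℂ :=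
  (-Complex.I) • H t - (1 / 2 : ℂ) • ∑ k, (γ k t : ℂ) • ((L k)ᴴ * L k)

/-! Write `A = A(s)`. Since `A + Aᴴ = -∑ₖ γₖ(s) Lₖᴴ Lₖ ≤ 0`, for `P ≥ 0` the function
`r ↦ Re tr (e^{rAᴴ} P e^{rA})` has derivative `Re tr ((A + Aᴴ) e^{rAᴴ} P e^{rA}) ≤ 0`, so
conjugation by `e^{tA}` does not increase the trace of positive matrices. Splitting
`σ = σ⁺ - σ⁻` with `‖σ‖₁ = tr σ⁺ + tr σ⁻`, and using `‖X - Y‖₁ ≤ tr X + tr Y` for `X, Y ≥ 0`,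
gives `‖e^{tAᴴ} σ e^{tA}‖₁ ≤ tr σ⁺ + tr σ⁻ = ‖σ‖₁`. -/

open scoped MatrixOrder

namespace Matrix

variable {n : Type*} [Fintype n] [DecidableEq n]

lemma re_trace_mul_nonneg {A B : Matrix n n ℂ} (hA : 0 ≤ A) (hB : 0 ≤ B) :
    0 ≤ (A * B).trace.re := by
  obtain ⟨C, rfl⟩ := CStarAlgebra.nonneg_iff_eq_star_mul_self.mp hB
  rw [← Matrix.mul_assoc, trace_mul_cycle, star_eq_conjTranspose]
  exact (Complex.nonneg_iff.mp
    ((nonneg_iff_posSemidef.mp hA).mul_mul_conjTranspose_same C).trace_nonneg).1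

/- With `S = sign (X - Y)` one has `|X - Y| = S (X - Y)` and `-1 ≤ S ≤ 1`, so
`tr |X - Y| = tr X + tr Y - tr ((1 - S) X) - tr ((1 + S) Y)`. -/
lemma re_trace_cfcAbs_sub_le {X Y : Matrix n n ℂ} (hX : 0 ≤ X) (hY : 0 ≤ Y) :
    (CFC.abs (X - Y)).trace.re ≤ X.trace.re + Y.trace.re := by
  have hZ : IsSelfAdjoint (X - Y) := hX.isSelfAdjoint.sub hY.isSelfAdjoint
  have hsign : ContinuousOn Real.sign (spectrum ℝ (X - Y)) :=
    (X - Y).finite_real_spectrum.continuousOn _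
  set S := cfc Real.sign (X - Y) with hS
  have habs : CFC.abs (X - Y) = S * (X - Y) := by
    conv_rhs => rw [hS]; enter [2]; rw [← cfc_id' ℝ (X - Y)]
    rw [← cfc_mul .., CFC.abs_eq_cfcₙ_norm _ hZ, cfcₙ_eq_cfc]
    refine cfc_congr fun x _ => ?_
    rcases lt_trichotomy x 0 with h | rfl | h
    · simp [Real.sign_of_neg h, abs_of_neg h]
    · simp
    · simp [Real.sign_of_pos h, abs_of_pos h]
  have hX' : 0 ≤ 1 - S := by
    rw [← cfc_one ℝ (X - Y), hS, ← cfc_sub ..]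
    refine cfc_nonneg fun x _ => ?_
    rcases Real.sign_apply_eq x with h | h | h <;> rw [h] <;> norm_num
  have hY' : 0 ≤ 1 + S := by
    rw [← cfc_one ℝ (X - Y), hS, ← cfc_add ..]
    refine cfc_nonneg fun x _ => ?_
    rcases Real.sign_apply_eq x with h | h | h <;> rw [h] <;> norm_num
  have hsplit : S * (X - Y) = X + Y - (1 - S) * X - (1 + S) * Y := by noncomm_ring
  have := re_trace_mul_nonneg hX' hX
  have := re_trace_mul_nonneg hY' hY
  rw [habs, hsplit, trace_sub, trace_sub, trace_add]
  simp only [Complex.sub_re, Complex.add_re]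
  linarith

section Exp

/- The entrywise sup norm made an instance above is not submultiplicative; the exponential
is differentiated in the `ℓ∞` operator norm instead. -/
attribute [-instance] Matrix.normedAddCommGroup Matrix.normedSpace
attribute [local instance] Matrix.linftyOpNormedRing Matrix.linftyOpNormedAlgebra

open NormedSpace

lemma exp_smul_conjTranspose (t : ℝ) (A : Matrix n n ℂ) :
    exp (t • Aᴴ) = (exp (t • A))ᴴ := by
  rw [← exp_conjTranspose, conjTranspose_smul, star_trivial]

lemma hasDerivAt_exp_conjTranspose_mul_mul_exp (A P : Matrix n n ℂ) (r : ℝ) :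
    HasDerivAt (fun u : ℝ => exp (u • Aᴴ) * P * exp (u • A))
      (Aᴴ * (exp (r • Aᴴ) * P * exp (r • A)) + exp (r • Aᴴ) * P * exp (r • A) * A) r := by
  refine (((hasDerivAt_exp_smul_const' Aᴴ r).mul_const P).mul
    (hasDerivAt_exp_smul_const A r)).congr_deriv ?_
  noncomm_ring

lemma antitone_re_trace_exp_conj {A P : Matrix n n ℂ} (hA : A + Aᴴ ≤ 0) (hP : 0 ≤ P) :
    Antitone fun r : ℝ => (exp (r • Aᴴ) * P * exp (r • A)).trace.re := by
  let reTrace : Matrix n n ℂ →L[ℝ] ℝ :=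
    Complex.reCLM.comp ((traceLinearMap n ℂ ℂ).restrictScalars ℝ).toContinuousLinearMap
  have hderiv (r : ℝ) : HasDerivAt (fun u : ℝ => (exp (u • Aᴴ) * P * exp (u • A)).trace.re)
      (Aᴴ * (exp (r • Aᴴ) * P * exp (r • A)) + exp (r • Aᴴ) * P * exp (r • A) * A).trace.re r :=
    reTrace.hasFDerivAt.comp_hasDerivAt r (hasDerivAt_exp_conjTranspose_mul_mul_exp A P r)
  refine antitone_of_deriv_nonpos (fun r => (hderiv r).differentiableAt) fun r => ?_
  rw [(hderiv r).deriv]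
  have hC : 0 ≤ exp (r • Aᴴ) * P * exp (r • A) := by
    rw [exp_smul_conjTranspose]
    exact star_left_conjugate_nonneg hP _
  set C := exp (r • Aᴴ) * P * exp (r • A)
  have htrace : (Aᴴ * C + C * A).trace = -((-(A + Aᴴ)) * C).trace := by
    rw [trace_add, trace_mul_comm C A, ← trace_add, ← add_mul, add_comm, neg_mul, trace_neg,
      neg_neg]
  have := re_trace_mul_nonneg (neg_nonneg.mpr hA) hC
  rw [htrace, Complex.neg_re]
  linarith

lemma re_trace_exp_conj_le {A P : Matrix n n ℂ} (hA : A + Aᴴ ≤ 0) (hP : 0 ≤ P) {t : ℝ}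
    (ht : 0 ≤ t) : ((exp (t • A))ᴴ * P * exp (t • A)).trace.re ≤ P.trace.re := by
  rw [← exp_smul_conjTranspose]
  simpa using antitone_re_trace_exp_conj hA hP ht

end Exp

end Matrix

lemma traceNorm_eq_re_trace_cfcAbs {m : ℕ} (X : Matrix (Fin m) (Fin m) ℂ) :
    traceNorm X = (CFC.abs X).trace.re := by
  have hX := posSemidef_conjTranspose_mul_self X
  rw [CFC.abs, star_eq_conjTranspose, CFC.sqrt_eq_real_sqrt _ hX.nonneg, cfcₙ_eq_cfc,
    hX.1.cfc_eq, IsHermitian.cfc, Unitary.conjStarAlgAut_apply, traceNorm]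
  rfl

lemma traceNorm_eq_re_trace_posPart_add_negPart {m : ℕ} {σ : Matrix (Fin m) (Fin m) ℂ}
    (hσ : σ.IsHermitian) : traceNorm σ = (σ⁺).trace.re + (σ⁻).trace.re := by
  rw [traceNorm_eq_re_trace_cfcAbs, ← CFC.posPart_add_negPart σ hσ, trace_add, Complex.add_re]

lemma traceNorm_sub_le {m : ℕ} {X Y : Matrix (Fin m) (Fin m) ℂ} (hX : 0 ≤ X) (hY : 0 ≤ Y) :
    traceNorm (X - Y) ≤ X.trace.re + Y.trace.re := by
  rw [traceNorm_eq_re_trace_cfcAbs]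
  exact re_trace_cfcAbs_sub_le hX hY

lemma traceNorm_conjTranspose_mul_mul_le {m : ℕ} {σ : Matrix (Fin m) (Fin m) ℂ}
    (hσ : σ.IsHermitian) (E : Matrix (Fin m) (Fin m) ℂ)
    (hE : ∀ P, 0 ≤ P → (Eᴴ * P * E).trace.re ≤ P.trace.re) :
    traceNorm (Eᴴ * σ * E) ≤ traceNorm σ := by
  have hsplit : Eᴴ * σ * E = Eᴴ * σ⁺ * E - Eᴴ * σ⁻ * E := by
    conv_lhs => rw [← CFC.posPart_sub_negPart σ hσ]
    rw [mul_sub, sub_mul]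
  calc traceNorm (Eᴴ * σ * E)
      ≤ (Eᴴ * σ⁺ * E).trace.re + (Eᴴ * σ⁻ * E).trace.re := by
        rw [hsplit]
        exact traceNorm_sub_le (star_left_conjugate_nonneg (CFC.posPart_nonneg σ) E)
          (star_left_conjugate_nonneg (CFC.negPart_nonneg σ) E)
    _ ≤ (σ⁺).trace.re + (σ⁻).trace.re :=
        add_le_add (hE _ (CFC.posPart_nonneg σ)) (hE _ (CFC.negPart_nonneg σ))
    _ = traceNorm σ := (traceNorm_eq_re_trace_posPart_add_negPart hσ).symm

lemma Aop_add_conjTranspose {m K : ℕ} {H : ℝ → Matrix (Fin m) (Fin m) ℂ}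
    (hH : ∀ t, (H t).IsHermitian) (L : Fin K → Matrix (Fin m) (Fin m) ℂ) (γ : Fin K → ℝ → ℝ)
    (s : ℝ) : Aop H L γ s + (Aop H L γ s)ᴴ = -∑ k, (γ k s : ℂ) • ((L k)ᴴ * L k) := by
  simp only [Aop, conjTranspose_sub, conjTranspose_smul, conjTranspose_sum, conjTranspose_mul,
    conjTranspose_conjTranspose, (hH s).eq, Complex.star_def, map_neg, Complex.conj_I,
    Complex.conj_ofReal, map_div₀, map_one, map_ofNat]
  module

lemma Aop_add_conjTranspose_nonpos {m K : ℕ} {H : ℝ → Matrix (Fin m) (Fin m) ℂ}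
    (hH : ∀ t, (H t).IsHermitian) (L : Fin K → Matrix (Fin m) (Fin m) ℂ) {γ : Fin K → ℝ → ℝ}
    (hγ : ∀ k t, 0 ≤ γ k t) (s : ℝ) : Aop H L γ s + (Aop H L γ s)ᴴ ≤ 0 := by
  rw [Aop_add_conjTranspose hH, neg_nonpos]
  refine Finset.sum_nonneg fun k _ => ?_
  rw [Complex.coe_smul]
  exact smul_nonneg (hγ k s) (star_mul_self_nonneg (L k))

theorem stmt_4_general {m K : ℕ}
    (H : ℝ → Matrix (Fin m) (Fin m) ℂ) (hH : ∀ t, (H t).IsHermitian)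
    (L : Fin K → Matrix (Fin m) (Fin m) ℂ)
    (γ : Fin K → ℝ → ℝ) (hγ : ∀ k t, 0 ≤ γ k t)
    (σ : Matrix (Fin m) (Fin m) ℂ) (hσ : σ.IsHermitian)
    (s : ℝ) (t : ℝ) (ht : 0 ≤ t) :
    traceNorm (NormedSpace.exp (t • (Aop H L γ s)ᴴ) * σ *
      NormedSpace.exp (t • Aop H L γ s)) ≤ traceNorm σ := by
  rw [exp_smul_conjTranspose]
  exact traceNorm_conjTranspose_mul_mul_le hσ _ fun P hP =>
    re_trace_exp_conj_le (Aop_add_conjTranspose_nonpos hH L hγ s) hP ht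

theorem stmt_4 {m K : ℕ} (hm : 1 ≤ m) (hK : 1 ≤ K)
    (H : ℝ → Matrix (Fin m) (Fin m) ℂ) (hH : ∀ t, (H t).IsHermitian)
    (L : Fin K → Matrix (Fin m) (Fin m) ℂ)
    (γ : Fin K → ℝ → ℝ) (hγc : ∀ k, Continuous (γ k)) (hγ : ∀ k t, 0 ≤ γ k t)
    (T : ℝ) (hT : 0 < T)
    (σ : Matrix (Fin m) (Fin m) ℂ) (hσ : σ.IsHermitian)
    (s : ℝ) (hs : s ∈ Set.Icc (0 : ℝ) T) (t : ℝ) (ht : 0 ≤ t) :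
    traceNorm (NormedSpace.exp (t • (Aop H L γ s)ᴴ) * σ *
      NormedSpace.exp (t • Aop H L γ s)) ≤ traceNorm σ :=
  stmt_4_general H hH L γ hγ σ hσ s t ht
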